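/- arXiv:2212.13744 — 2 statements merged into one kernel-verified Lean document; each statement's English description precedes it below -/
import Mathlib

section
/- Let E be a real Banach space, K ≥ 1 a natural number, and t_0 < t_1 < ... < t_K a grid of real numbers with maximal step size Δt = max_{1 ≤ k ≤ K} (t_k - t_{k-1}). Let y : ℝ → E and y' : ℝ → E be such that y has derivative y'(s) at every s ∈ [t_0, t_K] and y' is continuous on [t_0, t_K]. Then the piecewise-constant (left-endpoint) interpolation error satisfies ∑_{k=1}^{K} ∫_{t_{k-1}}^{t_k} ‖y(s) - y(t_{k-1})‖² ds ≤ Δt² · ∫_{t_0}^{t_K} ‖y'(s)‖² ds. -/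
/-!
On a grid interval `[a, b]` the displacement `‖y s - y a‖` is at most `∫ a..s, ‖y'‖`, so by
Cauchy–Schwarz `‖y s - y a‖² ≤ (b - a) ∫ a..b, ‖y'‖²` for every `s ∈ [a, b]`. Integrating over
`[a, b]` gives the factor `(b - a)² ≤ Δt²`, and the grid intervals add up to `[t 0, t K]`.
-/

open intervalIntegral Set
open MeasureTheory (volume ae_of_all)

theorem sq_intervalIntegral_le_mul_intervalIntegral_sq {f : ℝ → ℝ} {a b : ℝ} (hab : a ≤ b)
    (hf : IntervalIntegrable f volume a b)
    (hf2 : IntervalIntegrable (fun s => f s ^ 2) volume a b) :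
    (∫ s in a..b, f s) ^ 2 ≤ (b - a) * ∫ s in a..b, f s ^ 2 := by
  rcases hab.eq_or_lt with rfl | hlt
  · simp
  set I := ∫ s in a..b, f s
  set J := ∫ s in a..b, f s ^ 2
  -- expanding `0 ≤ ∫ ((b - a) f - I)²` gives `0 ≤ (b - a) ((b - a) J - I²)`
  have hexpand : ∫ s in a..b, ((b - a) * f s - I) ^ 2 = (b - a) * ((b - a) * J - I ^ 2) := by
    have hsq : (fun s => ((b - a) * f s - I) ^ 2)
        = fun s => (b - a) ^ 2 * f s ^ 2 - 2 * (b - a) * I * f s + I ^ 2 := by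
      funext s; ring
    rw [hsq, integral_add ((hf2.const_mul _).sub (hf.const_mul _)) intervalIntegrable_const,
      integral_sub (hf2.const_mul _) (hf.const_mul _), integral_const_mul, integral_const_mul,
      integral_const, smul_eq_mul]
    ring
  have hnonneg : 0 ≤ ∫ s in a..b, ((b - a) * f s - I) ^ 2 :=
    integral_nonneg hlt.le fun _ _ => sq_nonneg _
  rw [hexpand] at hnonneg
  linarith [(mul_nonneg_iff_of_pos_left (sub_pos.2 hlt)).1 hnonneg]

theorem norm_sub_sq_le_mul_integral_norm_deriv_sq {E : Type*} [NormedAddCommGroup E]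
    [NormedSpace ℝ E] {y y' : ℝ → E} {a b : ℝ} (hab : a ≤ b)
    (hderiv : ∀ s ∈ Icc a b, HasDerivAt y (y' s) s)
    (hy' : IntervalIntegrable (fun s => ‖y' s‖) volume a b)
    (hy'2 : IntervalIntegrable (fun s => ‖y' s‖ ^ 2) volume a b) :
    ‖y b - y a‖ ^ 2 ≤ (b - a) * ∫ s in a..b, ‖y' s‖ ^ 2 := by
  have hdist : ‖y b - y a‖ ≤ ∫ s in a..b, ‖y' s‖ := by
    refine norm_sub_le_integral_of_norm_deriv_le_of_le hab
      (fun s hs => (hderiv s hs).continuousAt.continuousWithinAt)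
      (fun s hs => (hderiv s (Ioo_subset_Icc_self hs)).differentiableAt.differentiableWithinAt)
      (ae_of_all _ fun s hs => ?_) hy'
    rw [(hderiv s (Ioo_subset_Icc_self hs)).deriv]
  calc ‖y b - y a‖ ^ 2 ≤ (∫ s in a..b, ‖y' s‖) ^ 2 := by gcongr
    _ ≤ (b - a) * ∫ s in a..b, ‖y' s‖ ^ 2 :=
      sq_intervalIntegral_le_mul_intervalIntegral_sq hab hy' hy'2

theorem integral_norm_sub_sq_le {E : Type*} [NormedAddCommGroup E]
    [NormedSpace ℝ E] {y y' : ℝ → E} {a b : ℝ} (hab : a ≤ b)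
    (hderiv : ∀ s ∈ Icc a b, HasDerivAt y (y' s) s)
    (hy' : IntervalIntegrable (fun s => ‖y' s‖) volume a b)
    (hy'2 : IntervalIntegrable (fun s => ‖y' s‖ ^ 2) volume a b) :
    ∫ s in a..b, ‖y s - y a‖ ^ 2 ≤ (b - a) ^ 2 * ∫ s in a..b, ‖y' s‖ ^ 2 := by
  set C := ∫ s in a..b, ‖y' s‖ ^ 2
  have hpointwise : ∀ s ∈ Icc a b, ‖y s - y a‖ ^ 2 ≤ (b - a) * C := by
    rintro s ⟨has, hsb⟩
    have hsub : uIcc a s ⊆ uIcc a b :=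
      uIcc_subset_uIcc_left (by rw [uIcc_of_le hab]; exact ⟨has, hsb⟩)
    calc ‖y s - y a‖ ^ 2 ≤ (s - a) * ∫ u in a..s, ‖y' u‖ ^ 2 :=
          norm_sub_sq_le_mul_integral_norm_deriv_sq has
            (fun u hu => hderiv u ⟨hu.1, hu.2.trans hsb⟩) (hy'.mono_set hsub) (hy'2.mono_set hsub)
      _ ≤ (b - a) * C := by
          gcongr
          · exact integral_nonneg has fun _ _ => sq_nonneg _
          · exact integral_mono_interval le_rfl has hsb (ae_of_all _ fun _ => sq_nonneg _) hy'2
  have hcont : ContinuousOn (fun s => ‖y s - y a‖ ^ 2) (Icc a b) :=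
    ((HasDerivAt.continuousOn hderiv).sub continuousOn_const).norm.pow 2
  calc ∫ s in a..b, ‖y s - y a‖ ^ 2 ≤ ∫ _ in a..b, (b - a) * C :=
        integral_mono_on hab (hcont.intervalIntegrable_of_Icc hab) intervalIntegrable_const
          hpointwise
    _ = (b - a) ^ 2 * C := by rw [integral_const, smul_eq_mul]; ring

theorem Finset.sum_Icc_one_eq_sum_range {M : Type*} [AddCommMonoid M] (f : ℕ → ℕ → M) (K : ℕ) :
    ∑ k ∈ Finset.Icc 1 K, f (k - 1) k = ∑ i ∈ Finset.range K, f i (i + 1) := by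
  rw [← Finset.Ico_add_one_right_eq_Icc, Finset.sum_Ico_eq_sum_range]
  simp [Nat.add_comm 1]

theorem Icc_subset_Icc_zero_of_lt_succ {α : Type*} [Preorder α] {t : ℕ → α} {K i : ℕ}
    (hmono : ∀ k < K, t k < t (k + 1)) (hi : i < K) :
    Icc (t i) (t (i + 1)) ⊆ Icc (t 0) (t K) :=
  have ht : MonotoneOn t (Iic K) := (strictMonoOn_Iic_of_lt_succ hmono).monotoneOn
  Icc_subset_Icc (ht (by simp) (by simp; omega) (Nat.zero_le i)) (ht (by simp; omega) (by simp) hi)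

theorem stmt5_general {E : Type*} [NormedAddCommGroup E] [NormedSpace ℝ E]
    (K : ℕ) (hK : 1 ≤ K) (t : ℕ → ℝ)
    (hmono : ∀ k, k < K → t k < t (k + 1))
    (Δt : ℝ)
    (hΔt : Δt = (Finset.Icc 1 K).sup' (Finset.nonempty_Icc.mpr hK)
      (fun k => t k - t (k - 1)))
    (y y' : ℝ → E)
    (hderiv : ∀ s ∈ Set.Icc (t 0) (t K), HasDerivAt y (y' s) s)
    (hcont : ContinuousOn y' (Set.Icc (t 0) (t K))) :
    ∑ k ∈ Finset.Icc 1 K, ∫ s in (t (k - 1))..(t k), ‖y s - y (t (k - 1))‖ ^ 2 ≤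
      Δt ^ 2 * ∫ s in (t 0)..(t K), ‖y' s‖ ^ 2 := by
  have hsub : ∀ i < K, Icc (t i) (t (i + 1)) ⊆ Icc (t 0) (t K) := fun _ =>
    Icc_subset_Icc_zero_of_lt_succ hmono
  have hstep : ∀ i < K, t (i + 1) - t i ≤ Δt := fun i hi => by
    simpa only [Nat.add_sub_cancel, ← hΔt] using
      Finset.le_sup' (fun k => t k - t (k - 1)) (Finset.mem_Icc.2 ⟨Nat.le_add_left 1 i, hi⟩)
  have hcont' : ∀ i < K, ContinuousOn y' (Icc (t i) (t (i + 1))) := fun i hi =>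
    hcont.mono (hsub i hi)
  have hint : ∀ i < K, IntervalIntegrable (fun s => ‖y' s‖) volume (t i) (t (i + 1)) :=
    fun i hi => (hcont' i hi).norm.intervalIntegrable_of_Icc (hmono i hi).le
  have hint2 : ∀ i < K, IntervalIntegrable (fun s => ‖y' s‖ ^ 2) volume (t i) (t (i + 1)) :=
    fun i hi => ((hcont' i hi).norm.pow 2).intervalIntegrable_of_Icc (hmono i hi).le
  rw [Finset.sum_Icc_one_eq_sum_range fun i j => ∫ s in (t i)..(t j), ‖y s - y (t i)‖ ^ 2,
    ← sum_integral_adjacent_intervals hint2, Finset.mul_sum]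
  refine Finset.sum_le_sum fun i hi => ?_
  rw [Finset.mem_range] at hi
  calc ∫ s in (t i)..(t (i + 1)), ‖y s - y (t i)‖ ^ 2
      ≤ (t (i + 1) - t i) ^ 2 * ∫ s in (t i)..(t (i + 1)), ‖y' s‖ ^ 2 :=
        integral_norm_sub_sq_le (hmono i hi).le (fun s hs => hderiv s (hsub i hi hs))
          (hint i hi) (hint2 i hi)
    _ ≤ Δt ^ 2 * ∫ s in (t i)..(t (i + 1)), ‖y' s‖ ^ 2 :=
        mul_le_mul_of_nonneg_right (pow_le_pow_left₀ (sub_nonneg.2 (hmono i hi).le) (hstep i hi) 2)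
          (integral_nonneg (hmono i hi).le fun _ _ => sq_nonneg _)

/-- Squared `L²`-in-time error of piecewise-constant (left-endpoint)
interpolation on a grid `t 0 < t 1 < ... < t K` is bounded by `Δt²` times the
squared `L²` norm of the time derivative, where `Δt` is the maximal step size. -/
theorem stmt5 {E : Type*} [NormedAddCommGroup E] [NormedSpace ℝ E] [CompleteSpace E]
    (K : ℕ) (hK : 1 ≤ K) (t : ℕ → ℝ)
    (hmono : ∀ k, k < K → t k < t (k + 1))
    (Δt : ℝ)
    (hΔt : Δt = (Finset.Icc 1 K).sup' (Finset.nonempty_Icc.mpr hK)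
      (fun k => t k - t (k - 1)))
    (y y' : ℝ → E)
    (hderiv : ∀ s ∈ Set.Icc (t 0) (t K), HasDerivAt y (y' s) s)
    (hcont : ContinuousOn y' (Set.Icc (t 0) (t K))) :
    ∑ k ∈ Finset.Icc 1 K, ∫ s in (t (k - 1))..(t k), ‖y s - y (t (k - 1))‖ ^ 2 ≤
      Δt ^ 2 * ∫ s in (t 0)..(t K), ‖y' s‖ ^ 2 :=
  stmt5_general K hK t hmono Δt hΔt y y' hderiv hcont
end

section
/- Let n ≥ 1, let M, V : Matrix (Fin n) (Fin n) ℝ be positive definite matrices, let w : Fin n → ℝ satisfy w_i ≥ 0 for all i, let Δt > 0, c > 0, a ≥ 0 be real numbers, and let F : Fin n → ℝ. Then there exists a unique y ∈ ℝⁿ (i.e., y : Fin n → ℝ) such that (1/Δt) • (M.mulVec y) + (c/2) • (V.mulVec y) + (a/2) • (fun i => w_i · max(0, y_i)) = F; that is, each Crank–Nicolson step of the nonsmooth scheme admits a unique solution. -/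
/-!
Writing `G(y) = A y + diag(w') max{0, y}` with `A = M/Δt + cV/2` positive definite and
`w' = a w / 2 ≥ 0`, the linear part is coercive on ℝⁿ (compactness of the unit sphere) and the
diagonal part is monotone and Lipschitz, so `G` is strongly monotone and Lipschitz for the
Euclidean inner product. By Zarantonello's argument, for a small step `τ > 0` the map
`z ↦ z - τ (G z - F)` is then a contraction, and its unique fixed point is the unique solution.
-/

open scoped NNReal InnerProductSpace

section Hilbert

variable {E : Type*} [NormedAddCommGroup E] [InnerProductSpace ℝ E]

theorem ContinuousLinearMap.exists_pos_mul_norm_sq_le_inner [FiniteDimensional ℝ E]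
    (T : E →L[ℝ] E) (hT : ∀ x ≠ 0, 0 < ⟪T x, x⟫_ℝ) :
    ∃ α > 0, ∀ x, α * ‖x‖ ^ 2 ≤ ⟪T x, x⟫_ℝ := by
  rcases subsingleton_or_nontrivial E with hE | hE
  · exact ⟨1, one_pos, fun x => by simp [Subsingleton.elim x 0]⟩
  obtain ⟨u₀, hu₀, hmin⟩ := (isCompact_sphere (0 : E) 1).exists_isMinOn
    (NormedSpace.sphere_nonempty.2 zero_le_one)
    (by fun_prop : Continuous fun x => ⟪T x, x⟫_ℝ).continuousOn
  refine ⟨_, hT u₀ (ne_zero_of_mem_unit_sphere ⟨u₀, hu₀⟩), fun x => ?_⟩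
  rcases eq_or_ne x 0 with rfl | hx
  · simp
  have hx' : ‖x‖ ≠ 0 := norm_ne_zero_iff.2 hx
  have hu : ‖x‖⁻¹ • x ∈ Metric.sphere (0 : E) 1 := by simp [norm_smul, hx']
  calc ⟪T u₀, u₀⟫_ℝ * ‖x‖ ^ 2
      ≤ ⟪T (‖x‖⁻¹ • x), ‖x‖⁻¹ • x⟫_ℝ * ‖x‖ ^ 2 := by
        gcongr; exact hmin hu
    _ = ⟪T x, x⟫_ℝ := by
      rw [map_smul, real_inner_smul_left, real_inner_smul_right]; field_simp

theorem norm_sub_smul_sub_sq_le {G : E → E} {α τ : ℝ} {L : ℝ≥0} (hτ : 0 ≤ τ)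
    (hτL : τ * L ^ 2 ≤ α) (hG : ∀ x y, α * ‖x - y‖ ^ 2 ≤ ⟪G x - G y, x - y⟫_ℝ)
    (hL : LipschitzWith L G) (x y : E) :
    ‖(x - y) - τ • (G x - G y)‖ ^ 2 ≤ (1 - τ * α) * ‖x - y‖ ^ 2 := by
  have hlip : ‖G x - G y‖ ^ 2 ≤ L ^ 2 * ‖x - y‖ ^ 2 := by
    rw [← mul_pow]; gcongr; exact hL.norm_sub_le x y
  rw [norm_sub_sq_real, real_inner_smul_right, real_inner_comm, norm_smul, mul_pow,
    Real.norm_eq_abs, sq_abs]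
  nlinarith [hG x y, mul_le_mul_of_nonneg_left hlip (sq_nonneg τ),
    mul_le_mul_of_nonneg_right hτL (mul_nonneg hτ (sq_nonneg ‖x - y‖))]

variable [CompleteSpace E]

theorem existsUnique_eq_of_stronglyMonotone_of_lipschitzWith {G : E → E} {α : ℝ}
    {L : ℝ≥0} (hα : 0 < α) (hG : ∀ x y, α * ‖x - y‖ ^ 2 ≤ ⟪G x - G y, x - y⟫_ℝ)
    (hL : LipschitzWith L G) (f : E) : ∃! x, G x = f := by
  -- this step gives `τ L² ≤ α` and `τ α ≤ 1`, hence the contraction constant `√(1 - τ α)`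
  set τ := α / (L ^ 2 + α ^ 2)
  have hτ : 0 < τ := by positivity
  have hτα : τ * α ≤ 1 := by
    rw [div_mul_eq_mul_div, div_le_one (by positivity)]; nlinarith [sq_nonneg (L : ℝ)]
  have hτL : τ * L ^ 2 ≤ α := by
    rw [div_mul_eq_mul_div, div_le_iff₀ (by positivity)]; nlinarith [sq_nonneg (L : ℝ)]
  set T : E → E := fun z => z - τ • (G z - f)
  set κ : ℝ≥0 := ⟨1 - τ * α, by linarith⟩
  have hT : ContractingWith (NNReal.sqrt κ) T := by
    refine ⟨?_, LipschitzWith.of_dist_le_mul fun x y => ?_⟩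
    · rw [← NNReal.sqrt_one, NNReal.sqrt_lt_sqrt, ← NNReal.coe_lt_coe]
      exact sub_lt_self 1 (mul_pos hτ hα)
    · have hTxy : T x - T y = (x - y) - τ • (G x - G y) := by
        simp only [T]; module
      rw [dist_eq_norm, dist_eq_norm, hTxy, ← pow_le_pow_iff_left₀ (norm_nonneg _)
        (by positivity) two_ne_zero, mul_pow, ← NNReal.coe_pow, NNReal.sq_sqrt]
      exact norm_sub_smul_sub_sq_le hτ.le hτL hG hL x y
  have hfix : ∀ z, Function.IsFixedPt T z ↔ G z = f := by
    intro z
    simp [T, Function.IsFixedPt, hτ.ne', sub_eq_zero]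
  have : Nonempty E := ⟨0⟩
  exact ⟨_, (hfix _).1 hT.fixedPoint_isFixedPt,
    fun y hy => hT.fixedPoint_unique ((hfix y).2 hy)⟩

theorem existsUnique_add_eq_of_coercive_of_monotone {T : E →L[ℝ] E} {α : ℝ}
    (hα : 0 < α) (hT : ∀ x, α * ‖x‖ ^ 2 ≤ ⟪T x, x⟫_ℝ) {N : E → E} {K : ℝ≥0}
    (hN : LipschitzWith K N)
    (hN_mono : ∀ x y, 0 ≤ ⟪N x - N y, x - y⟫_ℝ) (f : E) : ∃! x, T x + N x = f := by
  refine existsUnique_eq_of_stronglyMonotone_of_lipschitzWith hα (fun x y => ?_)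
    (T.lipschitz.add hN) f
  rw [add_sub_add_comm, ← map_sub, inner_add_left]
  linarith [hT (x - y), hN_mono x y]

end Hilbert

theorem Matrix.PosDef.exists_pos_mul_norm_sq_le_inner {ι : Type*} [Fintype ι]
    [DecidableEq ι] {A : Matrix ι ι ℝ} (hA : A.PosDef) :
    ∃ α > 0, ∀ x, α * ‖x‖ ^ 2 ≤ ⟪Matrix.toEuclideanCLM (𝕜 := ℝ) A x, x⟫_ℝ := by
  refine (Matrix.toEuclideanCLM (𝕜 := ℝ) A).exists_pos_mul_norm_sq_le_inner
    fun x hx => ?_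
  rw [real_inner_comm, Matrix.inner_toEuclideanCLM]
  simpa using hA.dotProduct_mulVec_pos (x := WithLp.ofLp x) (by simpa using hx)

theorem PiLp.lipschitzWith_of_dist_apply_le {ι : Type*} [Fintype ι] {β γ : ι → Type*}
    [∀ i, SeminormedAddCommGroup (β i)] [∀ i, SeminormedAddCommGroup (γ i)]
    {f : PiLp 2 β → PiLp 2 γ} {K : ℝ≥0}
    (h : ∀ x y i, dist (f x i) (f y i) ≤ K * dist (x i) (y i)) : LipschitzWith K f := by
  refine LipschitzWith.of_dist_le_mul fun x y => ?_
  rw [← pow_le_pow_iff_left₀ dist_nonneg (by positivity) two_ne_zero, mul_pow,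
    PiLp.dist_sq_eq_of_L2, PiLp.dist_sq_eq_of_L2, Finset.mul_sum]
  gcongr with i
  rw [← mul_pow]
  exact pow_le_pow_left₀ dist_nonneg (h x y i) 2

section DiagPosPart

variable {ι : Type*} [Fintype ι]

def diagPosPart (d : ι → ℝ) (z : EuclideanSpace ℝ ι) : EuclideanSpace ℝ ι :=
  WithLp.toLp 2 fun i => d i * max 0 (z i)

theorem lipschitzWith_diagPosPart (d : ι → ℝ) : LipschitzWith ‖d‖₊ (diagPosPart d) := by
  refine PiLp.lipschitzWith_of_dist_apply_le fun x y i => ?_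
  simp only [diagPosPart, PiLp.toLp_apply, Real.dist_eq, ← mul_sub, abs_mul, coe_nnnorm]
  refine mul_le_mul ?_ ?_ (abs_nonneg _) (norm_nonneg d)
  · exact (Real.norm_eq_abs _).symm.trans_le (norm_le_pi_norm d i)
  · rw [max_comm 0, max_comm 0]
    exact abs_max_sub_max_le_abs _ _ _

theorem inner_diagPosPart_sub_nonneg {d : ι → ℝ} (hd : 0 ≤ d) (x y : EuclideanSpace ℝ ι) :
    0 ≤ ⟪diagPosPart d x - diagPosPart d y, x - y⟫_ℝ := by
  have hmax : Monotone fun s : ℝ => max 0 s := monotone_const.max monotone_id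
  simp only [PiLp.inner_apply, diagPosPart, PiLp.sub_apply, RCLike.inner_apply, conj_trivial]
  refine Finset.sum_nonneg fun i _ => ?_
  rw [← mul_sub, mul_comm, mul_assoc]
  exact mul_nonneg (hd i) ((hmax.monovary monotone_id).sub_mul_sub_nonneg _ _)

end DiagPosPart

theorem stmt12_general {n : ℕ}
    (M V : Matrix (Fin n) (Fin n) ℝ) (hM : M.PosDef) (hV : V.PosDef)
    (w : Fin n → ℝ) (hw : ∀ i, 0 ≤ w i)
    (Δt c a : ℝ) (hΔt : 0 < Δt) (hc : 0 < c) (ha : 0 ≤ a)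
    (F : Fin n → ℝ) :
    ∃! y : Fin n → ℝ,
      (1 / Δt) • M.mulVec y + (c / 2) • V.mulVec y
          + (a / 2) • (fun i => w i * max 0 (y i)) = F := by
  set A := (1 / Δt) • M + (c / 2) • V
  have hA : A.PosDef := (hM.smul (by positivity)).add (hV.smul (by positivity))
  obtain ⟨α, hα, hA_coercive⟩ := hA.exists_pos_mul_norm_sq_le_inner
  have hd : 0 ≤ (a / 2) • w := fun i => mul_nonneg (by positivity) (hw i)
  refine ((WithLp.equiv 2 (Fin n → ℝ)).symm.existsUnique_congr fun y => ?_).2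
    (existsUnique_add_eq_of_coercive_of_monotone hα hA_coercive (lipschitzWith_diagPosPart _)
      (inner_diagPosPart_sub_nonneg hd) (WithLp.toLp 2 F))
  rw [← (WithLp.toLp_injective 2).eq_iff]
  congr! 1
  ext i
  simp [A, diagPosPart, mul_assoc]

/-- Unique solvability of each Crank–Nicolson step of the nonsmooth scheme:
the equation `(1/Δt) M y + (c/2) V y + (a/2) diag(w) max{0, y} = F` has a
unique solution. -/
theorem stmt12 {n : ℕ} (hn : 1 ≤ n)
    (M V : Matrix (Fin n) (Fin n) ℝ) (hM : M.PosDef) (hV : V.PosDef)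
    (w : Fin n → ℝ) (hw : ∀ i, 0 ≤ w i)
    (Δt c a : ℝ) (hΔt : 0 < Δt) (hc : 0 < c) (ha : 0 ≤ a)
    (F : Fin n → ℝ) :
    ∃! y : Fin n → ℝ,
      (1 / Δt) • M.mulVec y + (c / 2) • V.mulVec y
          + (a / 2) • (fun i => w i * max 0 (y i)) = F :=
  stmt12_general M V hM hV w hw Δt c a hΔt hc ha F
end
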